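/- Every ℂ-linear map f : 𝕆 → 𝕆 satisfying f(x·a) = f(x)·a for all x, a ∈ 𝕆 is multiplication by a complex scalar: there exists t ∈ ℂ such that f(x) = t·x for all x ∈ 𝕆. -/

import Mathlib

noncomputable section

open scoped Quaternion

/-- The complexified quaternions. -/
abbrev Hq : Type := Quaternion ℂ

theorem q_mul_smul (t : ℂ) (a b : Hq) : a * (t • b) = t • (a * b) := by
  rw [← Quaternion.coe_mul_eq_smul, ← Quaternion.coe_mul_eq_smul, ← mul_assoc,
    ← Quaternion.coe_commutes, mul_assoc]

theorem q_smul_mul (t : ℂ) (a b : Hq) : (t • a) * b = t • (a * b) := by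
  rw [← Quaternion.coe_mul_eq_smul, ← Quaternion.coe_mul_eq_smul, mul_assoc]

/-- The complexified octonions, via the Cayley–Dickson construction. -/
abbrev Oct : Type := Hq × Hq

namespace Oct

/-- Octonion multiplication (Cayley–Dickson construction). -/
def omul (x y : Oct) : Oct := (x.1 * y.1 - star y.2 * x.2, y.2 * x.1 + x.2 * star y.1)

/-- Octonion conjugation. -/
def oconj (x : Oct) : Oct := (star x.1, -x.2)

/-- The unit octonion. -/
def oone : Oct := (1, 0)

/-- Real part of an octonion: the unique scalar with `x + oconj x = (2 * oRe x) • oone`. -/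
def oRe (x : Oct) : ℂ := x.1.re

/-- Squared norm of an octonion: the unique scalar with `omul x (oconj x) = onormSq x • oone`. -/
def onormSq (x : Oct) : ℂ := Quaternion.normSq x.1 + Quaternion.normSq x.2

theorem omul_add (z x y : Oct) : omul z (x + y) = omul z x + omul z y := by
  simp only [omul, Prod.fst_add, Prod.snd_add,
    (fun a b => StarAddMonoid.star_add a b : ∀ a b : Hq, star (a + b) = star a + star b), mul_add, add_mul, Prod.mk_add_mk,
    Prod.mk.injEq]
  constructor <;> abel

theorem add_omul (x y z : Oct) : omul (x + y) z = omul x z + omul y z := by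
  simp only [omul, Prod.fst_add, Prod.snd_add, star_add, mul_add, add_mul, Prod.mk_add_mk,
    Prod.mk.injEq]
  constructor <;> abel

theorem omul_smul (t : ℂ) (z x : Oct) : omul z (t • x) = t • omul z x := by
  simp only [omul, Prod.smul_fst, Prod.smul_snd, Quaternion.star_smul, q_smul_mul,
    q_mul_smul, Prod.smul_mk, smul_sub, smul_add]

theorem smul_omul (t : ℂ) (x z : Oct) : omul (t • x) z = t • omul x z := by
  simp only [omul, Prod.smul_fst, Prod.smul_snd, Quaternion.star_smul, q_smul_mul,
    q_mul_smul, Prod.smul_mk, smul_sub, smul_add]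

/-- Left multiplication `L_z` as a `ℂ`-linear endomorphism of the octonions. -/
def Lmul (z : Oct) : Oct →ₗ[ℂ] Oct where
  toFun x := omul z x
  map_add' x y := omul_add z x y
  map_smul' t x := omul_smul t z x

/-- Right multiplication `R_z` as a `ℂ`-linear endomorphism of the octonions. -/
def Rmul (z : Oct) : Oct →ₗ[ℂ] Oct where
  toFun x := omul x z
  map_add' x y := add_omul x y z
  map_smul' t x := smul_omul t x z

end Oct

namespace Oct

/-- The octonionic determinant of the hermitian matrix
`[[λ₁, c, b̄], [c̄, λ₂, a], [b, ā, λ₃]]`. -/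
def detO (l1 l2 l3 : ℂ) (a b c : Oct) : ℂ :=
  l1 * l2 * l3 + 2 * oRe (omul c (omul a b)) - l1 * onormSq a - l2 * onormSq b - l3 * onormSq c

/-- The associator `[c,b,a] = (c·b)·a − c·(b·a)`. -/
def assoc (c b a : Oct) : Oct := omul (omul c b) a - omul c (omul b a)

/-- `φ(c,b,a) = (1/2)·Re((c·b̄ − b̄·c)·a)`. -/
def phi (c b a : Oct) : ℂ := (1 / 2) * oRe (omul (omul c (oconj b) - omul (oconj b) c) a)

/-- The Ogievetskiî–Dray–Manogue sextic. -/
def SODM (l1 l2 l3 : ℂ) (a b c : Oct) : ℂ :=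
  detO l1 l2 l3 a b c ^ 2 - 4 * phi c b a * detO l1 l2 l3 a b c - onormSq (assoc c b a)

/-- The Cartan cubic `C'` of the hermitian matrix `[[λ₁, c̄, ā], [c, λ₂, b], [a, b̄, λ₃]]`. -/
def cartan' (l1 l2 l3 : ℂ) (a b c : Oct) : ℂ :=
  detO l1 l2 l3 a b c - 2 * oRe (omul c (omul a b)) + 2 * oRe (omul (oconj c) (omul b a))

/-- The sextic `𝔖`. -/
def frakS (l1 l2 l3 : ℂ) (a b c : Oct) : ℂ :=
  (l1 * onormSq a + l2 * onormSq b + l3 * onormSq c - l1 * l2 * l3) ^ 2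
    - 4 * (l1 * onormSq a + l2 * onormSq b + l3 * onormSq c - l1 * l2 * l3)
        * oRe c * oRe (omul a b)
    + 4 * (onormSq b * onormSq a * oRe c ^ 2 + onormSq c * oRe (omul a b) ^ 2
        - onormSq a * onormSq b * onormSq c)

/-- The endomorphism `M_A` of `𝕆³` attached to
`A = [[λ₁, c, b̄], [c̄, λ₂, a], [b, ā, λ₃]] ∈ J₃(𝕆)`. -/
def MA (l1 l2 l3 : ℂ) (a b c : Oct) : Oct × Oct × Oct →ₗ[ℂ] Oct × Oct × Oct where
  toFun p := (l1 • p.1 + omul c p.2.1 + omul (oconj b) p.2.2,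
              omul (oconj c) p.1 + l2 • p.2.1 + omul a p.2.2,
              omul b p.1 + omul (oconj a) p.2.1 + l3 • p.2.2)
  map_add' p q := by
    simp only [Prod.fst_add, Prod.snd_add, omul_add, smul_add, Prod.mk_add_mk, Prod.mk.injEq]
    refine ⟨?_, ?_, ?_⟩ <;> abel
  map_smul' t p := by
    simp only [Prod.smul_fst, Prod.smul_snd, omul_smul, smul_comm t, Prod.smul_mk, smul_add,
      RingHom.id_apply]

/-- The endomorphism `N_A` of `𝕆³` of the twisted octonionic eigenvalue problem. -/
def NA (l1 l2 l3 : ℂ) (a b c : Oct) : Oct × Oct × Oct →ₗ[ℂ] Oct × Oct × Oct where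
  toFun p := (l1 • p.1 + omul p.2.1 c + omul (oconj b) p.2.2,
              omul p.1 (oconj c) + l2 • p.2.1 + omul a p.2.2,
              omul b p.1 + omul (oconj a) p.2.1 + l3 • p.2.2)
  map_add' p q := by
    simp only [Prod.fst_add, Prod.snd_add, omul_add, add_omul, smul_add, Prod.mk_add_mk,
      Prod.mk.injEq]
    refine ⟨?_, ?_, ?_⟩ <;> abel
  map_smul' t p := by
    simp only [Prod.smul_fst, Prod.smul_snd, omul_smul, smul_omul, smul_comm t, Prod.smul_mk,
      smul_add, RingHom.id_apply]

/-- The exceptional Jordan algebra `J₃(𝕆)`, as the 27-dimensional space of tuples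
`(λ₁, λ₂, λ₃, a, b, c)`. -/
abbrev J3 : Type := ℂ × ℂ × ℂ × Oct × Oct × Oct

def MAj (A : J3) : Oct × Oct × Oct →ₗ[ℂ] Oct × Oct × Oct :=
  MA A.1 A.2.1 A.2.2.1 A.2.2.2.1 A.2.2.2.2.1 A.2.2.2.2.2

def NAj (A : J3) : Oct × Oct × Oct →ₗ[ℂ] Oct × Oct × Oct :=
  NA A.1 A.2.1 A.2.2.1 A.2.2.2.1 A.2.2.2.2.1 A.2.2.2.2.2

def SODMj (A : J3) : ℂ := SODM A.1 A.2.1 A.2.2.1 A.2.2.2.1 A.2.2.2.2.1 A.2.2.2.2.2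

def cartan'j (A : J3) : ℂ := cartan' A.1 A.2.1 A.2.2.1 A.2.2.2.1 A.2.2.2.2.1 A.2.2.2.2.2

def frakSj (A : J3) : ℂ := frakS A.1 A.2.1 A.2.2.1 A.2.2.2.1 A.2.2.2.2.1 A.2.2.2.2.2

/-- A twisted triality pair: a pair of `ℂ`-linear norm-preserving bijections of `𝕆` with
`T₁(x)·T₂(y) = T₁(x·y)` for all `x, y`. -/
def TwistedPair (T1 T2 : Oct →ₗ[ℂ] Oct) : Prop :=
  Function.Bijective T1 ∧ Function.Bijective T2 ∧
    (∀ x, onormSq (T1 x) = onormSq x) ∧ (∀ x, onormSq (T2 x) = onormSq x) ∧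
    ∀ x y, omul (T1 x) (T2 y) = T1 (omul x y)

/-- `K(x) = conj (T₁ x̄)`. -/
def Kmap (T1 : Oct →ₗ[ℂ] Oct) (x : Oct) : Oct := oconj (T1 (oconj x))

/-- The twisted `Spin₇`-action on `J₃(𝕆)`:
`(T₁,T₂)·(λ₁, λ₂, λ₃, a, b, c) = (λ₁, λ₂, λ₃, T₁(a), K(b), T₂(c))`. -/
def spinAct (T1 T2 : Oct →ₗ[ℂ] Oct) (A : J3) : J3 :=
  (A.1, A.2.1, A.2.2.1, T1 A.2.2.2.1, Kmap T1 A.2.2.2.2.1, T2 A.2.2.2.2.2)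

/-- The hermitian matrix `[[λ₁, c, b̄], [c̄, λ₂, a], [b, ā, λ₃]]` attached to `A ∈ J₃(𝕆)`,
with complex scalars embedded as multiples of the unit octonion. -/
def toMat (A : J3) : Matrix (Fin 3) (Fin 3) Oct :=
  !![A.1 • oone, A.2.2.2.2.2, oconj A.2.2.2.2.1;
     oconj A.2.2.2.2.2, A.2.1 • oone, A.2.2.2.1;
     A.2.2.2.2.1, oconj A.2.2.2.1, A.2.2.1 • oone]

/-- The action of a (special linear) complex `3×3` matrix `C` on `J₃(𝕆)`, sending the hermitian
matrix `M` of `A` to `Cᵀ · M · C` (the entries of `C` being central scalars). -/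
def slAct (C : Matrix (Fin 3) (Fin 3) ℂ) (A : J3) : J3 :=
  let M : Matrix (Fin 3) (Fin 3) Oct :=
    Matrix.of fun i j => ∑ k, ∑ l, (C k i * C l j) • toMat A k l
  (oRe (M 0 0), oRe (M 1 1), oRe (M 2 2), M 1 2, M 2 0, M 0 1)

/-- The coordinates of `A ∈ J₃(𝕆)` in the fixed standard `ℂ`-basis of `ℂ³ × 𝕆³`. -/
def coords (A : J3) : Fin 27 → ℂ :=
  ![A.1, A.2.1, A.2.2.1,
    A.2.2.2.1.1.re, A.2.2.2.1.1.imI, A.2.2.2.1.1.imJ, A.2.2.2.1.1.imK,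
    A.2.2.2.1.2.re, A.2.2.2.1.2.imI, A.2.2.2.1.2.imJ, A.2.2.2.1.2.imK,
    A.2.2.2.2.1.1.re, A.2.2.2.2.1.1.imI, A.2.2.2.2.1.1.imJ, A.2.2.2.2.1.1.imK,
    A.2.2.2.2.1.2.re, A.2.2.2.2.1.2.imI, A.2.2.2.2.1.2.imJ, A.2.2.2.2.1.2.imK,
    A.2.2.2.2.2.1.re, A.2.2.2.2.2.1.imI, A.2.2.2.2.2.1.imJ, A.2.2.2.2.2.1.imK,
    A.2.2.2.2.2.2.re, A.2.2.2.2.2.2.imI, A.2.2.2.2.2.2.imJ, A.2.2.2.2.2.2.imK]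

end Oct

/-!
Applying right linearity to `x = 1 · x` gives `f x = f 1 · x`, so `f` is left multiplication by
`z = f 1`, and right linearity of `f` says that `z` associates with everything:
`(z x) a = z (x a)`. Writing `z = (p, q)` in the Cayley–Dickson decomposition, associativity with
`x = (u, 0)` and `a = (0, 1)` makes `p` commute with every quaternion `u`, so `p` is a complex
scalar, while associativity with `x = (i, 0)` and `a = (j, 0)` gives `2 q k = 0`, so `q = 0`.
-/

namespace Quaternion

variable {R : Type*} [CommRing R]

/-- A literal `⟨r, x, y, z⟩ : ℍ[R]` elaborates to a term of type `ℍ[R,-1,0,-1]`, on which the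
`Quaternion` simp lemmas do not fire. -/
def ofCoords (r x y z : R) : ℍ[R] := ⟨r, x, y, z⟩

@[simp] theorem re_ofCoords (r x y z : R) : (ofCoords r x y z).re = r := rfl

@[simp] theorem imI_ofCoords (r x y z : R) : (ofCoords r x y z).imI = x := rfl

@[simp] theorem imJ_ofCoords (r x y z : R) : (ofCoords r x y z).imJ = y := rfl

@[simp] theorem imK_ofCoords (r x y z : R) : (ofCoords r x y z).imK = z := rfl

theorem eq_coe_re_of_forall_commute [NoZeroDivisors R] [CharZero R] {a : ℍ[R]}
    (h : ∀ u, Commute u a) : a = a.re := by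
  have hI : a.imI = 0 := by
    simpa [imK_mul, CharZero.neg_eq_self_iff] using congr($((h (ofCoords 0 0 1 0)).eq).imK)
  have hJ : a.imJ = 0 := by
    simpa [imK_mul, CharZero.eq_neg_self_iff] using congr($((h (ofCoords 0 1 0 0)).eq).imK)
  have hK : a.imK = 0 := by
    simpa [imJ_mul, CharZero.neg_eq_self_iff] using congr($((h (ofCoords 0 1 0 0)).eq).imJ)
  ext <;> simp [hI, hJ, hK]

end Quaternion

namespace Oct

theorem oone_omul (x : Oct) : omul oone x = x := by
  simp [omul, oone]

theorem commute_fst_of_omul_assoc {z : Oct}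
    (h : ∀ x a, omul (omul z x) a = omul z (omul x a)) (u : Hq) : Commute u z.1 := by
  have hsnd := congrArg Prod.snd (h (u, 0) (0, 1))
  simp only [omul, mul_zero, zero_mul, sub_zero, star_zero, star_one, one_mul, zero_add,
    add_zero] at hsnd
  exact hsnd.symm

theorem snd_eq_zero_of_omul_assoc {z : Oct}
    (h : ∀ x a, omul (omul z x) a = omul z (omul x a)) : z.2 = 0 := by
  have hq : z.2.imK = 0 ∧ z.2.imJ = 0 ∧ z.2.imI = 0 ∧ z.2.re = 0 := by
    simpa [omul, Quaternion.ext_iff, Quaternion.re_mul, Quaternion.imI_mul, Quaternion.imJ_mul,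
      Quaternion.imK_mul, CharZero.neg_eq_self_iff, CharZero.eq_neg_self_iff]
      using congrArg Prod.snd (h (.ofCoords 0 1 0 0, 0) (.ofCoords 0 0 1 0, 0))
  ext <;> simp [hq]

theorem exists_eq_smul_oone_of_omul_assoc {z : Oct}
    (h : ∀ x a, omul (omul z x) a = omul z (omul x a)) : ∃ t : ℂ, z = t • oone := by
  have hfst := Quaternion.eq_coe_re_of_forall_commute (commute_fst_of_omul_assoc h)
  refine ⟨z.1.re, Prod.ext ?_ ?_⟩
  · simpa [oone, ← Quaternion.coe_mul_eq_smul] using hfst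
  · simp [oone, snd_eq_zero_of_omul_assoc h]

/-- Every `ℂ`-linear right-`𝕆`-linear endomorphism of `𝕆` is multiplication by a complex
scalar. -/
theorem right_linear_endo_is_scalar (f : Oct →ₗ[ℂ] Oct)
    (hf : ∀ x a : Oct, f (omul x a) = omul (f x) a) :
    ∃ t : ℂ, ∀ x : Oct, f x = t • x := by
  have hleft : ∀ x, f x = omul (f oone) x := fun x => by rw [← hf, oone_omul]
  obtain ⟨t, ht⟩ := exists_eq_smul_oone_of_omul_assoc (z := f oone) fun x a => by
    rw [← hleft, ← hleft, hf]
  exact ⟨t, fun x => by rw [hleft x, ht, smul_omul, oone_omul]⟩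

end Oct
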